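/- Let p be a prime, and let γ ≥ 0, n ≥ 0, g ≥ 2 be integers satisfying the Riemann–Hurwitz relation n(p−1) = 2(g−1+p(1−γ)) together with the inequality 3n(p−1) + 6p(γ−1) ≤ 12(γ−1) + 4n, and exclude the degenerate cases (γ = 0 and n ≤ 3) and (γ = 1 and n = 0). Then p = 2. -/
import Mathlib

/-- Riemann–Hurwitz `n(p−1) = 2(g−1+p(1−γ))` together with the
dimension inequality `3n(p−1) + 6p(γ−1) ≤ 12(γ−1) + 4n`, excluding the degenerate
cases `(γ = 0 ∧ n ≤ 3)` and `(γ = 1 ∧ n = 0)`, forces the prime `p` to be `2`. -/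
theorem prime_eq_two_of_riemann_hurwitz_dimension_bound
    (p : ℕ) (hp : p.Prime) (γ n g : ℤ)
    (hγ : 0 ≤ γ) (hn : 0 ≤ n) (hg : 2 ≤ g)
    (hRH : n * ((p : ℤ) - 1) = 2 * (g - 1 + (p : ℤ) * (1 - γ)))
    (hineq : 3 * n * ((p : ℤ) - 1) + 6 * (p : ℤ) * (γ - 1) ≤ 12 * (γ - 1) + 4 * n)
    (hdeg0 : ¬ (γ = 0 ∧ n ≤ 3))
    (hdeg1 : ¬ (γ = 1 ∧ n = 0)) :
    p = 2 := by
  by_contra h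
  have h2 := hp.two_le
  have h3 : (3 : ℤ) ≤ (p : ℤ) := by exact_mod_cast (by omega : 3 ≤ p)
  rcases eq_or_ne γ 0 with hγ0 | hγ0
  · have hn4 : 4 ≤ n := by
      by_contra hn4
      exact hdeg0 ⟨hγ0, by omega⟩
    subst hγ0
    nlinarith
  · have hγ1 : 1 ≤ γ := by omega
    rcases eq_or_ne γ 1 with hγ2 | hγ2
    · have hn1 : 1 ≤ n := by
        by_contra hn1
        exact hdeg1 ⟨hγ2, by omega⟩
      subst hγ2
      nlinarith
    · have : 2 ≤ γ := by omega
      nlinarith
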